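/- Let 0 < p < 4 and ω² = p/4 with ω ∈ (−1,1). Define, for λ ∈ (−1,1), h₁(λ) = −2·(4/p + 1)·E(Φ_ω) − 2λ·(2(4−p)/p + 1)·Q(Φ_ω) + 2·(1 − λ²·(4−p)/p)·∫_ℝ φ_λ² dx + 2ω·( Q(Φ_λ) − Q(Φ_ω) ). Then h₁ is twice differentiable at λ = ω with h₁(ω) = 0, h₁'(ω) = 0, and h₁''(ω) = (16/p)·∫_ℝ φ_ω² dx > 0. -/

import Mathlib

open MeasureTheory Real Filter

/-- The explicit ground state `φ_ω` of `-φ'' + (1-ω²)φ = φ^{p+1}`. -/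
noncomputable def phi (p ω : ℝ) : ℝ → ℝ := fun x =>
  ((p + 2) * (1 - ω ^ 2) / 2) ^ (1 / p) *
    Real.cosh (p / 2 * Real.sqrt (1 - ω ^ 2) * x) ^ (-(2 / p))

/-- Momentum `Q(u,v) = ∫ u v`. -/
noncomputable def Qm (u v : ℝ → ℝ) : ℝ := ∫ x : ℝ, u x * v x

/-- Energy `E(u,v) = ½∫((∂ₓu)² + u² + v²) - (1/(p+2))∫|u|^{p+2}`. -/
noncomputable def En (p : ℝ) (u v : ℝ → ℝ) : ℝ :=
  (1 / 2) * (∫ x : ℝ, ((deriv u x) ^ 2 + (u x) ^ 2 + (v x) ^ 2))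
    - (1 / (p + 2)) * ∫ x : ℝ, |u x| ^ (p + 2)

/-- The function `h₁` from the monotonicity argument. -/
noncomputable def h1 (p ω l : ℝ) : ℝ :=
  -2 * (4 / p + 1) * En p (phi p ω) (fun x => -ω * phi p ω x)
    - 2 * l * (2 * (4 - p) / p + 1) * Qm (phi p ω) (fun x => -ω * phi p ω x)
    + 2 * (1 - l ^ 2 * (4 - p) / p) * (∫ x : ℝ, (phi p l x) ^ 2)
    + 2 * ω * (Qm (phi p l) (fun x => -l * phi p l x)
        - Qm (phi p ω) (fun x => -ω * phi p ω x))

open Set Topology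

/-!
Write `φ_l = A^{1/p} cosh(k x)^{-2/p}`. Every integral in `E(Φ_l)` is a multiple of
`∫ cosh(kx)^{-4/p}` or `∫ cosh(kx)^{-4/p-2}`, and integrating `(sinh · cosh^{-(s+1)})'` over
`ℝ` gives `J(s+2) = s/(s+1) J(s)` for `J(s) = ∫ cosh^{-s}`, so `E(Φ_l)` and `Q(Φ_l) = -l M(l)`
are explicit multiples of the mass `M(l) = ∫ φ_l²`. Scaling gives `M(l) = M(0) (1-l²)^{2/p-1/2}`,
hence `(1-l²) M' = -((4-p)/p) l M`. Thus `h₁(l) = a + b l + q(l) M(l)` with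
`q(l) = 2 - 2((4-p)/p) l² - 2ω l`, and at `p = 4ω²` one has `q(ω) = 0` and `M'(ω) = -M(ω)/ω`;
the three identities are then direct computations.
-/

section SechPowers

variable {s : ℝ}

lemma integrable_exp_neg_mul_abs (hs : 0 < s) : Integrable fun x : ℝ => exp (-(s * |x|)) := by
  rw [← integrableOn_univ, ← Iic_union_Ioi (a := 0)]
  refine ((integrableOn_exp_mul_Iic hs 0).congr_fun (fun x hx => ?_) measurableSet_Iic).union
    ((integrableOn_exp_mul_Ioi (neg_neg_of_pos hs) 0).congr_fun (fun x hx => ?_) measurableSet_Ioi)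
  · simp [abs_of_nonpos (mem_Iic.1 hx)]
  · simp [abs_of_pos (mem_Ioi.1 hx)]

lemma cosh_rpow_neg_le (hs : 0 ≤ s) (x : ℝ) : cosh x ^ (-s) ≤ 2 ^ s * exp (-(s * |x|)) := by
  have h : exp |x| / 2 ≤ cosh x := by
    rw [← cosh_abs, cosh_eq]; linarith [(exp_pos (-|x|)).le]
  calc cosh x ^ (-s) ≤ (exp |x| / 2) ^ (-s) :=
        rpow_le_rpow_of_nonpos (by positivity) h (neg_nonpos.2 hs)
    _ = 2 ^ s * exp (-(s * |x|)) := by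
      rw [div_rpow (exp_pos _).le zero_le_two, ← exp_mul, rpow_neg zero_le_two, div_inv_eq_mul,
        mul_comm, mul_comm |x|, neg_mul]

lemma tendsto_cosh_rpow_neg (hs : 0 < s) {l : Filter ℝ} (hl : Tendsto (|·|) l atTop) :
    Tendsto (fun x => cosh x ^ (-s)) l (𝓝 0) := by
  have h : Tendsto (fun x => 2 ^ s * exp (-(s * |x|))) l (𝓝 0) := by
    simpa using (tendsto_exp_neg_atTop_nhds_zero.comp (hl.const_mul_atTop hs)).const_mul (2 ^ s)
  exact squeeze_zero (fun x => by positivity) (cosh_rpow_neg_le hs.le) h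

lemma integrable_cosh_rpow_neg (hs : 0 < s) : Integrable fun x => cosh x ^ (-s) :=
  ((integrable_exp_neg_mul_abs hs).const_mul _).mono'
    (continuous_cosh.rpow_const fun x => Or.inl (cosh_pos x).ne').aestronglyMeasurable
    (ae_of_all _ fun x => by rw [norm_of_nonneg (by positivity)]; exact cosh_rpow_neg_le hs.le x)

noncomputable def sechIntegral (s : ℝ) : ℝ := ∫ x, cosh x ^ (-s)

lemma sechIntegral_pos (hs : 0 < s) : 0 < sechIntegral s := by
  refine (integral_pos_iff_support_of_nonneg (fun x => by positivity)
    (integrable_cosh_rpow_neg hs)).2 ?_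
  rw [Function.support_eq_univ fun x => (rpow_pos_of_pos (cosh_pos x) _).ne',
    Measure.measure_univ_pos]
  exact NeZero.ne _

lemma abs_sinh_le_cosh (x : ℝ) : |sinh x| ≤ cosh x :=
  abs_le.2 ⟨by linarith [sinh_lt_cosh (-x), sinh_neg x, cosh_neg x], (sinh_lt_cosh x).le⟩

lemma sechIntegral_add_two (hs : 0 < s) :
    sechIntegral (s + 2) = s / (s + 1) * sechIntegral s := by
  have hcosh (x : ℝ) : cosh x ≠ 0 := (cosh_pos x).ne'
  set F : ℝ → ℝ := fun x => sinh x * cosh x ^ (-(s + 1))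
  have hF (x : ℝ) : HasDerivAt F ((s + 1) * cosh x ^ (-(s + 2)) - s * cosh x ^ (-s)) x := by
    refine ((hasDerivAt_sinh x).mul ((hasDerivAt_cosh x).rpow_const (p := -(s + 1))
      (Or.inl (hcosh x)))).congr_deriv ?_
    rw [show -(s + 1) - 1 = -(s + 2) by ring, show -s = -(s + 2) + 2 by ring,
      show -(s + 1) = -(s + 2) + 1 by ring, rpow_add_one (hcosh x),
      show (2 : ℝ) = (2 : ℕ) by norm_num, rpow_add_natCast (hcosh x)]
    linear_combination (s + 1) * cosh x ^ (-(s + 2)) * cosh_sq x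
  have hF_le (x : ℝ) : ‖F x‖ ≤ cosh x ^ (-s) := by
    rw [norm_mul, norm_eq_abs, norm_of_nonneg (by positivity), show -s = -(s + 1) + 1 by ring,
      rpow_add_one (hcosh x), mul_comm (cosh x ^ _)]
    exact mul_le_mul_of_nonneg_right (abs_sinh_le_cosh x) (by positivity)
  have hint := integrable_cosh_rpow_neg (s := s + 2) (by linarith)
  have key := integral_of_hasDerivAt_of_tendsto hF
    ((hint.const_mul _).sub ((integrable_cosh_rpow_neg hs).const_mul _))
    (squeeze_zero_norm hF_le (tendsto_cosh_rpow_neg hs tendsto_abs_atBot_atTop))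
    (squeeze_zero_norm hF_le (tendsto_cosh_rpow_neg hs tendsto_abs_atTop_atTop))
  rw [integral_sub (hint.const_mul _) ((integrable_cosh_rpow_neg hs).const_mul _),
    integral_const_mul, integral_const_mul, sub_zero, sub_eq_zero] at key
  rw [sechIntegral, sechIntegral, div_mul_eq_mul_div, eq_div_iff (by positivity), mul_comm, key]

lemma integral_cosh_mul_rpow_neg {k : ℝ} (hk : 0 < k) (s : ℝ) :
    ∫ x, cosh (k * x) ^ (-s) = k⁻¹ * sechIntegral s := by
  simpa [sechIntegral, abs_of_pos hk] using
    Measure.integral_comp_mul_left (fun y => cosh y ^ (-s)) k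

lemma integrable_cosh_mul_rpow_neg {k : ℝ} (hk : 0 < k) (hs : 0 < s) :
    Integrable fun x => cosh (k * x) ^ (-s) :=
  (integrable_cosh_rpow_neg hs).comp_mul_left' hk.ne'

end SechPowers

section SechProfile

variable {p A k : ℝ}

noncomputable def sechProfile (p A k x : ℝ) : ℝ := A ^ (1 / p) * cosh (k * x) ^ (-(2 / p))

lemma sechProfile_sq (hA : 0 ≤ A) (x : ℝ) :
    sechProfile p A k x ^ 2 = A ^ (2 / p) * cosh (k * x) ^ (-(4 / p)) := by
  rw [sechProfile, mul_pow, ← rpow_mul_natCast hA, ← rpow_mul_natCast (cosh_pos _).le]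
  ring_nf

lemma abs_sechProfile_rpow (hp : 0 < p) (hA : 0 < A) (x : ℝ) :
    |sechProfile p A k x| ^ (p + 2) = A * A ^ (2 / p) * cosh (k * x) ^ (-(4 / p + 2)) := by
  rw [abs_of_nonneg (by unfold sechProfile; positivity), sechProfile,
    mul_rpow (by positivity) (by positivity), ← rpow_mul hA.le, ← rpow_mul (cosh_pos _).le,
    show 1 / p * (p + 2) = 1 + 2 / p by field_simp,
    show -(2 / p) * (p + 2) = -(4 / p + 2) by field_simp; ring, rpow_add hA, rpow_one]

lemma deriv_sechProfile_sq (hA : 0 ≤ A) (x : ℝ) :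
    deriv (sechProfile p A k) x ^ 2 =
      (2 * k / p) ^ 2 * A ^ (2 / p) *
        (cosh (k * x) ^ (-(4 / p)) - cosh (k * x) ^ (-(4 / p + 2))) := by
  have hcosh : cosh (k * x) ≠ 0 := (cosh_pos _).ne'
  have hd : HasDerivAt (sechProfile p A k)
      (A ^ (1 / p) * (sinh (k * x) * k * (-(2 / p)) * cosh (k * x) ^ (-(2 / p) - 1))) x :=
    (((hasDerivAt_cosh _).comp x ((hasDerivAt_id x).const_mul k)).rpow_const
      (Or.inl hcosh)).const_mul _ |>.congr_deriv (by simp)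
  have hA2 : A ^ (2 / p) = (A ^ (1 / p)) ^ 2 := by rw [← rpow_mul_natCast hA]; ring_nf
  have hc2 : cosh (k * x) ^ (-(4 / p + 2)) = (cosh (k * x) ^ (-(2 / p) - 1)) ^ 2 := by
    rw [← rpow_mul_natCast (cosh_pos _).le]; ring_nf
  rw [hd.deriv, show (-(4 / p) : ℝ) = -(4 / p + 2) + (2 : ℕ) by push_cast; ring,
    rpow_add_natCast hcosh, hA2, hc2]
  linear_combination -(2 * k / p) ^ 2 * (A ^ (1 / p)) ^ 2 * (cosh (k * x) ^ (-(2 / p) - 1)) ^ 2 *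
    cosh_sq (k * x)

lemma integral_cosh_mul_rpow_neg_add_two (hk : 0 < k) {s : ℝ} (hs : 0 < s) :
    ∫ x, cosh (k * x) ^ (-(s + 2)) = s / (s + 1) * ∫ x, cosh (k * x) ^ (-s) := by
  rw [integral_cosh_mul_rpow_neg hk, integral_cosh_mul_rpow_neg hk, sechIntegral_add_two hs]
  ring

lemma integrable_sechProfile_sq (hp : 0 < p) (hA : 0 ≤ A) (hk : 0 < k) :
    Integrable fun x => sechProfile p A k x ^ 2 := by
  simp_rw [sechProfile_sq hA]
  exact (integrable_cosh_mul_rpow_neg hk (by positivity)).const_mul _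

lemma integrable_deriv_sechProfile_sq (hp : 0 < p) (hA : 0 ≤ A) (hk : 0 < k) :
    Integrable fun x => deriv (sechProfile p A k) x ^ 2 := by
  simp_rw [deriv_sechProfile_sq hA]
  exact ((integrable_cosh_mul_rpow_neg hk (by positivity)).sub
    (integrable_cosh_mul_rpow_neg hk (by positivity))).const_mul _

lemma integral_sechProfile_sq (hA : 0 ≤ A) (hk : 0 < k) :
    ∫ x, sechProfile p A k x ^ 2 = A ^ (2 / p) * k⁻¹ * sechIntegral (4 / p) := by
  simp_rw [sechProfile_sq hA]
  rw [integral_const_mul, integral_cosh_mul_rpow_neg hk, mul_assoc]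

lemma integral_abs_sechProfile_rpow (hp : 0 < p) (hA : 0 < A) (hk : 0 < k) :
    ∫ x, |sechProfile p A k x| ^ (p + 2) = 4 * A / (4 + p) * ∫ x, sechProfile p A k x ^ 2 := by
  simp_rw [abs_sechProfile_rpow hp hA, sechProfile_sq hA.le]
  rw [integral_const_mul, integral_const_mul,
    integral_cosh_mul_rpow_neg_add_two hk (by positivity)]
  field_simp

lemma integral_deriv_sechProfile_sq (hp : 0 < p) (hA : 0 ≤ A) (hk : 0 < k) :
    ∫ x, deriv (sechProfile p A k) x ^ 2 =
      4 * k ^ 2 / (p * (4 + p)) * ∫ x, sechProfile p A k x ^ 2 := by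
  simp_rw [deriv_sechProfile_sq hA, sechProfile_sq hA]
  rw [integral_const_mul, integral_sub (integrable_cosh_mul_rpow_neg hk (by positivity))
    (integrable_cosh_mul_rpow_neg hk (by positivity)),
    integral_cosh_mul_rpow_neg_add_two hk (by positivity), integral_const_mul]
  field_simp
  ring

lemma En_sechProfile (hp : 0 < p) (hA : 0 < A) (hk : 0 < k) (c : ℝ) :
    En p (sechProfile p A k) (fun x => c * sechProfile p A k x) =
      (2 * k ^ 2 / (p * (4 + p)) + (1 + c ^ 2) / 2 - 4 * A / ((p + 2) * (4 + p))) *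
        ∫ x, sechProfile p A k x ^ 2 := by
  have hsplit (x : ℝ) : deriv (sechProfile p A k) x ^ 2 + sechProfile p A k x ^ 2 +
      (c * sechProfile p A k x) ^ 2 =
      deriv (sechProfile p A k) x ^ 2 + (1 + c ^ 2) * sechProfile p A k x ^ 2 := by ring
  rw [En]
  simp_rw [hsplit]
  rw [integral_add (integrable_deriv_sechProfile_sq hp hA.le hk)
    ((integrable_sechProfile_sq hp hA.le hk).const_mul _), integral_const_mul,
    integral_deriv_sechProfile_sq hp hA.le hk, integral_abs_sechProfile_rpow hp hA hk]
  field_simp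
  ring

end SechProfile

lemma Qm_const_mul_self (u : ℝ → ℝ) (c : ℝ) : Qm u (fun x => c * u x) = c * ∫ x, u x ^ 2 := by
  rw [Qm, ← integral_const_mul]
  congr 1 with x
  ring

section GroundState

variable {p l : ℝ}

noncomputable def phiMass (p l : ℝ) : ℝ := ∫ x, phi p l x ^ 2

lemma phi_eq_sechProfile (p l : ℝ) :
    phi p l = sechProfile p ((p + 2) * (1 - l ^ 2) / 2) (p / 2 * √(1 - l ^ 2)) := rfl

lemma one_sub_sq_pos (hl : l ∈ Ioo (-1 : ℝ) 1) : 0 < 1 - l ^ 2 := by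
  nlinarith [hl.1, hl.2]

lemma phiMass_eq_sechIntegral (hp : 0 < p) (hl : l ∈ Ioo (-1 : ℝ) 1) :
    phiMass p l = ((p + 2) * (1 - l ^ 2) / 2) ^ (2 / p) * (p / 2 * √(1 - l ^ 2))⁻¹ *
      sechIntegral (4 / p) := by
  have := one_sub_sq_pos hl
  exact integral_sechProfile_sq (by positivity) (by positivity)

lemma phiMass_pos (hp : 0 < p) (hl : l ∈ Ioo (-1 : ℝ) 1) : 0 < phiMass p l := by
  have := one_sub_sq_pos hl
  have := sechIntegral_pos (s := 4 / p) (by positivity)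
  rw [phiMass_eq_sechIntegral hp hl]
  positivity

lemma phiMass_eq_mul_rpow (hp : 0 < p) (hl : l ∈ Ioo (-1 : ℝ) 1) :
    phiMass p l = phiMass p 0 * (1 - l ^ 2) ^ (2 / p - 1 / 2) := by
  have hl2 := one_sub_sq_pos hl
  rw [phiMass_eq_sechIntegral hp hl, phiMass_eq_sechIntegral hp (by norm_num), rpow_sub hl2,
    sqrt_eq_rpow,
    show (p + 2) * (1 - l ^ 2) / 2 = (p + 2) / 2 * (1 - l ^ 2) by ring,
    mul_rpow (by positivity) hl2.le]
  simp only [ne_eq, OfNat.ofNat_ne_zero, not_false_eq_true, zero_pow, sub_zero, mul_one, sqrt_one]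
  field_simp

lemma hasDerivAt_phiMass (hp : 0 < p) (hl : l ∈ Ioo (-1 : ℝ) 1) :
    HasDerivAt (phiMass p) (-((4 - p) / p) * l / (1 - l ^ 2) * phiMass p l) l := by
  have hl2 := one_sub_sq_pos hl
  have hd := (((hasDerivAt_pow 2 l).const_sub 1).rpow_const (p := 2 / p - 1 / 2)
    (Or.inl hl2.ne')).const_mul (phiMass p 0)
  have heq : phiMass p =ᶠ[𝓝 l] fun l => phiMass p 0 * (1 - l ^ 2) ^ (2 / p - 1 / 2) :=
    Filter.eventually_of_mem (isOpen_Ioo.mem_nhds hl) fun l hl => phiMass_eq_mul_rpow hp hl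
  refine (hd.congr_of_eventuallyEq heq).congr_deriv ?_
  rw [phiMass_eq_mul_rpow hp hl, rpow_sub_one hl2.ne']
  field_simp
  ring

lemma En_phi (hp : 0 < p) (hl : l ∈ Ioo (-1 : ℝ) 1) :
    En p (phi p l) (fun x => -l * phi p l x) =
      (p * (1 - l ^ 2) / (2 * (4 + p)) + (1 + l ^ 2) / 2 - 2 * (1 - l ^ 2) / (4 + p)) *
        phiMass p l := by
  have hl2 := one_sub_sq_pos hl
  rw [phi_eq_sechProfile, En_sechProfile hp (by positivity) (by positivity), ← phi_eq_sechProfile,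
    mul_pow, sq_sqrt hl2.le]
  congr 1
  field_simp
  ring

end GroundState

section H1

variable {p ω l : ℝ}

lemma hasDerivAt_quadratic (a b c x : ℝ) :
    HasDerivAt (fun l => a - b * l ^ 2 - c * l) (-(2 * b) * x - c) x :=
  ((hasDerivAt_pow 2 x).const_mul b |>.const_sub a).sub ((hasDerivAt_id x).const_mul c)
    |>.congr_deriv (by norm_num; ring)

lemma h1_eq (p ω l : ℝ) : h1 p ω l =
    -2 * (4 / p + 1) * En p (phi p ω) (fun x => -ω * phi p ω x) + 2 * ω ^ 2 * phiMass p ω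
      + 2 * (2 * (4 - p) / p + 1) * ω * phiMass p ω * l
      + (2 - 2 * (4 - p) / p * l ^ 2 - 2 * ω * l) * phiMass p l := by
  simp only [h1, Qm_const_mul_self, phiMass]
  ring

noncomputable def h1Deriv (p ω l : ℝ) : ℝ :=
  2 * (2 * (4 - p) / p + 1) * ω * phiMass p ω
    + (-(4 * (4 - p) / p) * l - 2 * ω
      + (2 - 2 * (4 - p) / p * l ^ 2 - 2 * ω * l) * (-((4 - p) / p) * l / (1 - l ^ 2)))
      * phiMass p l

lemma hasDerivAt_h1 (hp : 0 < p) (hl : l ∈ Ioo (-1 : ℝ) 1) :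
    HasDerivAt (h1 p ω) (h1Deriv p ω l) l := by
  have hd := (((hasDerivAt_id l).const_mul (2 * (2 * (4 - p) / p + 1) * ω * phiMass p ω))
    |>.const_add (-2 * (4 / p + 1) * En p (phi p ω) (fun x => -ω * phi p ω x)
      + 2 * ω ^ 2 * phiMass p ω)).add
    ((hasDerivAt_quadratic 2 (2 * (4 - p) / p) (2 * ω) l).mul (hasDerivAt_phiMass hp hl))
  rw [show h1 p ω = _ from funext (h1_eq p ω)]
  refine hd.congr_deriv ?_
  rw [h1Deriv]
  ring

end H1

section CriticalFrequency

variable {ω : ℝ} (hω0 : ω ≠ 0) (hω : ω ∈ Ioo (-1 : ℝ) 1)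
include hω0 hω

lemma h1_self_eq_zero : h1 (4 * ω ^ 2) ω ω = 0 := by
  rw [h1_eq, En_phi (by positivity) hω]
  field_simp
  ring

lemma h1Deriv_self_eq_zero : h1Deriv (4 * ω ^ 2) ω ω = 0 := by
  have := (one_sub_sq_pos hω).ne'
  rw [h1Deriv]
  field_simp
  ring

lemma hasDerivAt_h1Deriv_self :
    HasDerivAt (h1Deriv (4 * ω ^ 2) ω) (16 / (4 * ω ^ 2) * phiMass (4 * ω ^ 2) ω) ω := by
  set p := 4 * ω ^ 2 with hp
  have hω2 := (one_sub_sq_pos hω).ne'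
  have hg := ((hasDerivAt_id ω).const_mul (-((4 - p) / p))).div
    ((hasDerivAt_pow 2 ω).const_sub 1) hω2
  have hr := (((hasDerivAt_id ω).const_mul (-(4 * (4 - p) / p))).sub_const (2 * ω)).add
    ((hasDerivAt_quadratic 2 (2 * (4 - p) / p) (2 * ω) ω).mul hg)
  have hd := (hr.mul (hasDerivAt_phiMass (p := p) (by positivity) hω)).const_add
    (2 * (2 * (4 - p) / p + 1) * ω * phiMass p ω)
  refine hd.congr_deriv ?_
  simp only [Pi.add_apply, Pi.mul_apply, Pi.div_apply, id_eq, Nat.cast_ofNat, hp]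
  field_simp
  ring

end CriticalFrequency

theorem h1_properties_general (p ω : ℝ) (hp : 0 < p)
    (hω1 : -1 < ω) (hω2 : ω < 1) (hcrit : ω ^ 2 = p / 4) :
    h1 p ω ω = 0 ∧
    HasDerivAt (h1 p ω) 0 ω ∧
    HasDerivAt (deriv (h1 p ω)) ((16 / p) * ∫ x : ℝ, (phi p ω x) ^ 2) ω ∧
    0 < (16 / p) * ∫ x : ℝ, (phi p ω x) ^ 2 := by
  obtain rfl : p = 4 * ω ^ 2 := by linarith
  have hω0 : ω ≠ 0 := by rintro rfl; simp at hp
  have hω : ω ∈ Ioo (-1 : ℝ) 1 := ⟨hω1, hω2⟩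
  have hderiv : deriv (h1 (4 * ω ^ 2) ω) =ᶠ[𝓝 ω] h1Deriv (4 * ω ^ 2) ω :=
    Filter.eventually_of_mem (isOpen_Ioo.mem_nhds hω) fun l hl => (hasDerivAt_h1 hp hl).deriv
  refine ⟨h1_self_eq_zero hω0 hω, ?_, ?_, mul_pos (by positivity) (phiMass_pos hp hω)⟩
  · exact h1Deriv_self_eq_zero hω0 hω ▸ hasDerivAt_h1 hp hω
  · exact (hasDerivAt_h1Deriv_self hω0 hω).congr_of_eventuallyEq hderiv

/-- At the critical frequency `ω² = p/4`, the function `h₁` is twice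
differentiable at `ω` with `h₁(ω) = 0`, `h₁'(ω) = 0` and
`h₁''(ω) = (16/p)∫φ_ω² > 0`. -/
theorem h1_properties (p ω : ℝ) (hp : 0 < p) (hp4 : p < 4)
    (hω1 : -1 < ω) (hω2 : ω < 1) (hcrit : ω ^ 2 = p / 4) :
    h1 p ω ω = 0 ∧
    HasDerivAt (h1 p ω) 0 ω ∧
    HasDerivAt (deriv (h1 p ω)) ((16 / p) * ∫ x : ℝ, (phi p ω x) ^ 2) ω ∧
    0 < (16 / p) * ∫ x : ℝ, (phi p ω x) ^ 2 :=
  h1_properties_general p ω hp hω1 hω2 hcrit
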